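/- arXiv:2208.14688 — 5 statements merged into one kernel-verified Lean document; each statement's English description precedes it below -/
import Mathlib

section
/- Let O be a one-dimensional noetherian domain with field of fractions K, with normalization Õ finite over O, and let O' be a subring with O ⊆ O' ⊆ Õ. If a ∈ K* is a unit in the localization Õ_p of the normalization at a maximal ideal p of O, then ord_p(a) = 0, where ord_p(a/b) = len(O_p/aO_p) − len(O_p/bO_p) for a,b ∈ O nonzero. -/
set_option maxHeartbeats 1000000
set_option synthInstance.maxHeartbeats 400000

noncomputable section
namespace ChowPaper


open scoped nonZeroDivisors

/-- Composition length of the `Localization.AtPrime p`-module `O_p / a O_p`. -/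
def lenQ (R : Type*) [CommRing R] (p : Ideal R) [p.IsPrime] (a : R) : ℕ :=
  ((WithBot.unbotD 0 (Order.krullDim (Submodule (Localization.AtPrime p)
    ((Localization.AtPrime p) ⧸
      (Ideal.span {algebraMap R (Localization.AtPrime p) a}))))).toNat)

/-- `ord_p(x)` for `x = a/b` in the fraction field, defined as
`len(R_p/aR_p) - len(R_p/bR_p)` via a choice of representation `x = a/b`. -/
def ord (R : Type*) [CommRing R] (K : Type*) [Field K] [Algebra R K]
    (p : Ideal R) [p.IsPrime] (x : K) : ℤ :=
  letI := Classical.dec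
  if h : ∃ ab : R × R, ab.2 ≠ 0 ∧ x * algebraMap R K ab.2 = algebraMap R K ab.1 then
    (lenQ R p h.choose.1 : ℤ) - (lenQ R p h.choose.2 : ℤ)
  else 0

/-- The residue degree `[O'/P : O/(P ∩ O)]`. -/
def resDeg (O O' : Type*) [CommRing O] [CommRing O'] [Algebra O O'] (P : Ideal O') : ℕ :=
  letI : Algebra (O ⧸ P.comap (algebraMap O O')) (O' ⧸ P) :=
    (Ideal.quotientMap P (algebraMap O O') le_rfl).toAlgebra
  Module.finrank (O ⧸ P.comap (algebraMap O O')) (O' ⧸ P)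

/-- The group of divisors: the free abelian group on the maximal ideals. -/
abbrev Div (R : Type*) [CommRing R] : Type _ := MaximalSpectrum R →₀ ℤ

/-- The subgroup of principal divisors. -/
def prin (R : Type*) [CommRing R] (K : Type*) [Field K] [Algebra R K] :
    AddSubgroup (Div R) :=
  AddSubgroup.closure {D : Div R | ∃ a : K, a ≠ 0 ∧
    ∀ p : MaximalSpectrum R, D p = @ord R _ K _ _ p.asIdeal p.2.isPrime a}

/-- The Chow group: divisors modulo principal divisors. -/
abbrev Chow (R : Type*) [CommRing R] (K : Type*) [Field K] [Algebra R K] : Type _ :=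
  Div R ⧸ prin R K


open scoped nonZeroDivisors

/-!
Write `a = c / d` with `c, d ∈ O` and put `A = O_p`. For an ideal `I` of `A` containing a nonzero
element and a nonzero `x ∈ A`, comparing the filtrations `xI ⊆ I ⊆ A` and `xI ⊆ xA ⊆ A` of `A/xI`
gives `len(A/xA) = len(I/xI)`, because `A/I` has finite length. Take `I = 𝔣A`, where `𝔣 = (O : Õ)`
is the conductor: it is an `Õ`-module, and it contains a nonzero element because `Õ` is finite
over `O`. As `s a` and `t a⁻¹` lie in `Õ` for units `s, t` of `A`, we get `s c 𝔣 ⊆ d 𝔣` and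
`t d 𝔣 ⊆ c 𝔣`, hence `len(A/dA) ≤ len(A/cA) ≤ len(A/dA)`.
-/

end ChowPaper

open scoped Pointwise nonZeroDivisors

namespace Submodule

variable {R M : Type*} [CommRing R] [AddCommGroup M] [Module R M]

theorem comap_subtype_smul (N : Submodule R M) (x : R) : (x • N).comap N.subtype = x • ⊤ := by
  rw [← comap_map_eq_of_injective N.injective_subtype (x • ⊤), map_pointwise_smul,
    map_subtype_top]

theorem comap_lsmul_smul_of_isSMulRegular (N : Submodule R M) {x : R} (hx : IsSMulRegular M x) :
    (x • N).comap (LinearMap.lsmul R M x) = N := by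
  ext m
  simp only [mem_comap, LinearMap.lsmul_apply, mem_smul_pointwise_iff_exists]
  exact ⟨fun ⟨n, hn, h⟩ => hx h ▸ hn, fun hm => ⟨m, hm, rfl⟩⟩

theorem _root_.LinearMap.range_lsmul (x : R) : LinearMap.range (LinearMap.lsmul R M x) = x • ⊤ := by
  ext m
  simp [mem_smul_pointwise_iff_exists]

theorem length_quotient_smul_eq_length_quotSMulTop_add (N : Submodule R M) (x : R) :
    Module.length R (M ⧸ x • N) = Module.length R (QuotSMulTop x N) + Module.length R (M ⧸ N) := by
  refine Module.length_eq_add_of_exact (mapQ _ _ N.subtype (comap_subtype_smul N x).ge)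
    (factor (smul_le_self_of_tower x N)) ?_ (factor_surjective _) ?_
  · rw [← LinearMap.ker_eq_bot, ker_mapQ, comap_subtype_smul, mkQ_map_self]
  · rw [LinearMap.exact_iff, factor, ker_mapQ, range_mapQ]
    simp

theorem length_quotient_smul_eq_length_quotient_add_of_isSMulRegular (N : Submodule R M) {x : R}
    (hx : IsSMulRegular M x) :
    Module.length R (M ⧸ x • N) = Module.length R (M ⧸ N) + Module.length R (QuotSMulTop x M) := by
  refine Module.length_eq_add_of_exact
    (mapQ _ _ (LinearMap.lsmul R M x) (comap_lsmul_smul_of_isSMulRegular N hx).ge)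
    (factor (smul_le_smul_left x le_top)) ?_ (factor_surjective _) ?_
  · rw [← LinearMap.ker_eq_bot, ker_mapQ, comap_lsmul_smul_of_isSMulRegular N hx, mkQ_map_self]
  · rw [LinearMap.exact_iff, factor, ker_mapQ, range_mapQ, LinearMap.range_lsmul, comap_id]

theorem length_quotSMulTop_eq_of_isFiniteLength (N : Submodule R M)
    (hN : IsFiniteLength R (M ⧸ N)) {x : R} (hx : IsSMulRegular M x) :
    Module.length R (QuotSMulTop x N) = Module.length R (QuotSMulTop x M) := by
  have h := (length_quotient_smul_eq_length_quotSMulTop_add N x).symm.trans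
    (length_quotient_smul_eq_length_quotient_add_of_isSMulRegular N hx)
  rw [add_comm] at h
  exact WithTop.add_left_cancel (Module.length_ne_top_iff.mpr hN) h

end Submodule

namespace Subalgebra

theorem exists_mem_colon_of_finite {R K : Type*} [CommRing R] [CommRing K] [Algebra R K]
    (S : Submonoid R) [IsLocalization S K] (B : Subalgebra R K) [Module.Finite R B] :
    ∃ r ∈ S, r ∈ (1 : Submodule R K).colon (B : Set K) := by
  obtain ⟨r, hrS, hr⟩ := FractionalIdeal.isFractional_of_fg (S := S)
    (Module.Finite.iff_fg.mp ‹Module.Finite R B› : (Subalgebra.toSubmodule B).FG)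
  exact ⟨r, hrS, Submodule.mem_colon.mpr fun b hb => Submodule.mem_one.mpr (hr b hb)⟩

theorem smul_colon_le_smul_colon {R S : Type*} [CommRing R] [CommRing S] [Algebra R S]
    (hinj : Function.Injective (algebraMap R S)) (B : Subalgebra R S) {u : S} (hu : u ∈ B)
    {x y : R} (hxy : algebraMap R S x = u * algebraMap R S y) :
    x • (1 : Submodule R S).colon (B : Set S) ≤ y • (1 : Submodule R S).colon (B : Set S) := by
  rintro _ ⟨j, hj, rfl⟩
  have hj' := Submodule.mem_colon.mp hj
  obtain ⟨w, hw⟩ := Submodule.mem_one.mp (hj' u hu)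
  refine ⟨w, Submodule.mem_colon.mpr fun b hb => ?_, hinj ?_⟩
  · rw [Algebra.smul_def, hw, Algebra.smul_def, mul_assoc, ← Algebra.smul_def]
    exact hj' _ (B.mul_mem hu hb)
  · simp only [DistribSMul.toLinearMap_apply, smul_eq_mul, map_mul, hw, Algebra.smul_def, hxy]
    ring

end Subalgebra

namespace Ring

variable {A : Type*} [CommRing A]

theorem ord_eq_length_quotSMulTop (I : Ideal A) (hI : IsFiniteLength A (A ⧸ I)) {x : A}
    (hx : x ∈ A⁰) : ord A x = Module.length A (QuotSMulTop x I) := by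
  rw [Submodule.length_quotSMulTop_eq_of_isFiniteLength I hI
    (Module.Flat.isSMulRegular_of_nonZeroDivisors hx), ord]
  unfold QuotSMulTop
  rw [← Submodule.ideal_span_singleton_smul, smul_eq_mul, Ideal.mul_top]

theorem ord_le_ord_of_smul_le [IsNoetherianRing A] [KrullDimLE 1 A] {I : Ideal A} {r : A}
    (hr : r ∈ I) (hr0 : r ∈ A⁰) {x y : A} (hx : x ∈ A⁰) (hy : y ∈ A⁰) (h : x • I ≤ y • I) :
    ord A y ≤ ord A x := by
  have hI : IsFiniteLength A (A ⧸ I) := (isFiniteLength_quotient_span_singleton A hr0).of_surjective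
    (Submodule.factor_surjective ((Ideal.span_singleton_le_iff_mem I).mpr hr))
  have hxy : x • (⊤ : Submodule A I) ≤ y • ⊤ := by
    simpa only [Submodule.comap_subtype_smul] using Submodule.comap_mono (f := I.subtype) h
  rw [ord_eq_length_quotSMulTop I hI hx, ord_eq_length_quotSMulTop I hI hy]
  exact Module.length_le_of_surjective _ (Submodule.factor_surjective hxy)

theorem ord_algebraMap_le_of_smul_le {O : Type*} [CommRing O] [IsDomain O] [IsNoetherianRing O]
    [DimensionLEOne O] (p : Ideal O) [p.IsPrime] {J : Ideal O} {r : O} (hr : r ∈ J)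
    (hr0 : r ≠ 0) {x y : O} (hx : x ≠ 0) (hy : y ≠ 0) (h : x • J ≤ y • J) :
    ord (Localization.AtPrime p) (algebraMap O _ y) ≤
      ord (Localization.AtPrime p) (algebraMap O _ x) := by
  have := DimensionLEOne.localization (Localization.AtPrime p) p.primeCompl_le_nonZeroDivisors
  have hmem {z : O} (hz : z ≠ 0) : algebraMap O (Localization.AtPrime p) z ∈ _⁰ :=
    mem_nonZeroDivisors_of_ne_zero <|
      (map_ne_zero_iff _ (IsLocalization.injective _ p.primeCompl_le_nonZeroDivisors)).mpr hz
  refine ord_le_ord_of_smul_le (Ideal.mem_map_of_mem _ hr) (hmem hr0) (hmem hx) (hmem hy) ?_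
  simpa only [Ideal.map_pointwise_smul] using
    Ideal.map_mono (f := algebraMap O (Localization.AtPrime p)) h

theorem ord_algebraMap_le_of_exists_mul_div_mem {O K : Type*} [CommRing O] [IsDomain O]
    [IsNoetherianRing O] [DimensionLEOne O] [Field K] [Algebra O K] [IsFractionRing O K]
    [Module.Finite O (integralClosure O K)] (p : Ideal O) [p.IsPrime] {x y : O} (hx : x ≠ 0)
    (hy : y ≠ 0)
    (h : ∃ s ∉ p, algebraMap O K s * (algebraMap O K x / algebraMap O K y) ∈ integralClosure O K) :
    ord (Localization.AtPrime p) (algebraMap O _ y) ≤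
      ord (Localization.AtPrime p) (algebraMap O _ x) := by
  obtain ⟨s, hs, hu⟩ := h
  obtain ⟨r, hr0, hr⟩ := Subalgebra.exists_mem_colon_of_finite O⁰ (integralClosure O K)
  have hinj := IsFractionRing.injective O K
  have hyK : algebraMap O K y ≠ 0 := (map_ne_zero_iff _ hinj).mpr hy
  have hs0 : s ≠ 0 := by rintro rfl; exact hs p.zero_mem
  have hle := ord_algebraMap_le_of_smul_le p hr (nonZeroDivisors.ne_zero hr0)
    (mul_ne_zero hs0 hx) hy (Subalgebra.smul_colon_le_smul_colon hinj _ hu (x := s * x) (y := y)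
      (by rw [map_mul]; field_simp))
  rwa [map_mul, ord_mul_of_isUnit_left
    (IsLocalization.map_units _ (⟨s, hs⟩ : p.primeCompl))] at hle

end Ring

namespace ChowPaper

theorem lenQ_eq_toNat_ord (R : Type*) [CommRing R] (p : Ideal R) [p.IsPrime] (a : R) :
    lenQ R p a = (Ring.ord (Localization.AtPrime p) (algebraMap R _ a)).toNat := by
  rw [lenQ, ← Module.coe_length, WithBot.unbotD_coe]
  rfl

theorem ord_eq_zero_of_lenQ_eq {R : Type*} [CommRing R] {K : Type*} [Field K] [Algebra R K]
    (p : Ideal R) [p.IsPrime] {x : K}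
    (h : ∀ c d : R, d ≠ 0 → x * algebraMap R K d = algebraMap R K c → lenQ R p c = lenQ R p d) :
    ord R K p x = 0 := by
  rw [ord]
  split_ifs with hx
  · exact sub_eq_zero.mpr (congrArg _ (h _ _ hx.choose_spec.1 hx.choose_spec.2))
  · rfl

theorem stmt0_general (O : Type*) [CommRing O] [IsDomain O] [IsNoetherianRing O] [Ring.DimensionLEOne O]
    (K : Type*) [Field K] [Algebra O K] [IsFractionRing O K]
    [Module.Finite O (integralClosure O K)]
    (p : Ideal O) (hp : p.IsMaximal)
    (a : K) (ha : a ≠ 0)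
    (h1 : ∃ s : O, s ∉ p ∧ algebraMap O K s * a ∈ integralClosure O K)
    (h2 : ∃ t : O, t ∉ p ∧ algebraMap O K t * a⁻¹ ∈ integralClosure O K) :
    @ord O _ K _ _ p hp.isPrime a = 0 := by
  have := hp.isPrime
  refine ord_eq_zero_of_lenQ_eq p fun c d hd hcd => ?_
  have hinj := IsFractionRing.injective O K
  have hdK : algebraMap O K d ≠ 0 := (map_ne_zero_iff _ hinj).mpr hd
  have hc : c ≠ 0 := (map_ne_zero_iff _ hinj).mp (hcd ▸ mul_ne_zero ha hdK)
  have hac : a = algebraMap O K c / algebraMap O K d := eq_div_of_mul_eq hdK hcd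
  rw [lenQ_eq_toNat_ord, lenQ_eq_toNat_ord]
  congr 1
  refine le_antisymm (Ring.ord_algebraMap_le_of_exists_mul_div_mem (K := K) p hd hc ?_)
    (Ring.ord_algebraMap_le_of_exists_mul_div_mem (K := K) p hc hd ?_)
  · rwa [hac, inv_div] at h2
  · rwa [hac] at h1

theorem stmt0 (O : Type*) [CommRing O] [IsDomain O] [IsNoetherianRing O] [Ring.DimensionLEOne O]
    (K : Type*) [Field K] [Algebra O K] [IsFractionRing O K]
    [Module.Finite O (integralClosure O K)]
    (O' : Subalgebra O K) (hO' : O' ≤ integralClosure O K)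
    (p : Ideal O) (hp : p.IsMaximal)
    (a : K) (ha : a ≠ 0)
    (h1 : ∃ s : O, s ∉ p ∧ algebraMap O K s * a ∈ integralClosure O K)
    (h2 : ∃ t : O, t ∉ p ∧ algebraMap O K t * a⁻¹ ∈ integralClosure O K) :
    @ord O _ K _ _ p hp.isPrime a = 0 :=
  stmt0_general O K p hp a ha h1 h2

end ChowPaper
end
end

section
/- Let O be a one-dimensional noetherian domain with normalization Õ finite over O, and let f_* : Div(Õ) → Div(O) be the push-forward Σ a_P · P ↦ Σ a_P · deg_{P∩O}(P) · (P∩O). Let p₁,…,p_r be the non-invertible maximal ideals of O, and for each i let P_{i,1},…,P_{i,r_i} be the maximal ideals of Õ over p_i with degrees d_{i,j} = [Õ/P_{i,j} : O/p_i], and g_i = gcd(d_{i,1},…,d_{i,r_i}). Then the image of f_* equals { Σ_p a_p p ∈ Div(O) : g_i divides a_{p_i} for all i }, the kernel equals { Σ_{i,j} a_{i,j} P_{i,j} : Σ_j a_{i,j} d_{i,j} = 0 for all i }, the cokernel of f_* is isomorphic to ∏_{i=1}^r ℤ/g_iℤ, and f_* is injective if and only if r_i = 1 for all i. -/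
/-!
The coefficient of `f_* D` at `p` is `∑_{P ∣ p} D_P · deg P`, so all four claims are statements
about a weighted push-forward of finitely supported `ℤ`-valued functions, checked fibre by fibre:
by Bézout the image at `p` is `g_p ℤ`, and the map is injective exactly when no fibre has two
points. The invertible primes do not contribute: writing `1 = a + c` with `a ∈ p` and `c ∈ F`,
every `y ∈ Õ` is congruent to `c y ∈ O` modulo `pÕ`, so `pÕ` is the only prime over `p` and
its residue field is `O/p`.
-/

set_option maxHeartbeats 1000000
set_option synthInstance.maxHeartbeats 400000

noncomputable section
namespace ChowPaper


open scoped nonZeroDivisors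

open scoped nonZeroDivisors

section Conductor
variable (O : Type*) [CommRing O] [IsDomain O] (K : Type*) [Field K] [Algebra O K]

/-- The conductor `F = {x ∈ K : x·Õ ⊆ O}` of `O`, as an ideal of the
normalization `Õ = integralClosure O K`. -/
def conductorIdeal : Ideal (integralClosure O K) where
  carrier := {x | ∀ y : integralClosure O K, ((x * y : integralClosure O K) : K) ∈ (algebraMap O K).range}
  add_mem' := by
    intro a b ha hb y
    have h : (a + b) * y = a * y + b * y := by ring
    rw [h, Subalgebra.coe_add]
    exact add_mem (ha y) (hb y)
  zero_mem' := by
    intro y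
    rw [zero_mul, Subalgebra.coe_zero]
    exact zero_mem _
  smul_mem' := by
    intro c x hx y
    have h : c • x * y = x * (c * y) := by rw [smul_eq_mul]; ring
    rw [h]
    exact hx (c * y)

/-- Pulling back a maximal ideal of the normalization to a maximal ideal of `O`. -/
def comapMax (P : MaximalSpectrum (integralClosure O K)) : MaximalSpectrum O :=
  ⟨P.asIdeal.comap (algebraMap O (integralClosure O K)),
    @Ideal.isMaximal_comap_of_isIntegral_of_isMaximal O _ (integralClosure O K) _ _ _ P.asIdeal P.2⟩

/-- The push-forward `f_* : Div(Õ) → Div(O)`, sending a maximal ideal `P` to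
`deg(P) · (P ∩ O)`. -/
def pushforward : Div (integralClosure O K) →+ Div O :=
  Finsupp.liftAddHom fun P =>
    zmultiplesHom _ (Finsupp.single (comapMax O K P)
      (resDeg O (integralClosure O K) P.asIdeal : ℤ))
end Conductor

theorem Finset.natCast_gcd {β : Type*} (s : Finset β) (d : β → ℕ) :
    ((s.gcd d : ℕ) : ℤ) = s.gcd fun b => (d b : ℤ) := by
  classical
  induction s using Finset.induction with
  | empty => simp
  | insert b s hb ih => simp [Finset.gcd_insert, ← ih, ← Int.coe_gcd, gcd_eq_nat_gcd]

section WeightedPush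
open Finsupp

variable {α β : Type*} (π : β → α) (d : β → ℕ)

def weightedPush : (β →₀ ℤ) →+ (α →₀ ℤ) :=
  liftAddHom fun b => zmultiplesHom _ (single (π b) (d b : ℤ))

theorem weightedPush_single (b : β) (n : ℤ) :
    weightedPush π d (single b n) = single (π b) (n * d b) := by
  simp [weightedPush, smul_single]

variable {π} {fiber : α → Finset β} (hfiber : ∀ a b, b ∈ fiber a ↔ π b = a)
include hfiber

theorem weightedPush_apply (D : β →₀ ℤ) (a : α) :
    weightedPush π d D a = ∑ b ∈ fiber a, D b * d b := by
  classical
  induction D using Finsupp.induction_linear with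
  | zero => simp
  | add D E hD hE => simp [hD, hE, add_mul, Finset.sum_add_distrib]
  | single b n =>
    simp only [weightedPush_single, single_apply, ite_mul, zero_mul, Finset.sum_ite_eq, hfiber]

theorem range_weightedPush :
    Set.range (weightedPush π d) = {E | ∀ a, (((fiber a).gcd d : ℕ) : ℤ) ∣ E a} := by
  classical
  ext E
  constructor
  · rintro ⟨D, rfl⟩ a
    rw [weightedPush_apply d hfiber]
    exact Finset.dvd_sum fun b hb =>
      (Int.natCast_dvd_natCast.mpr (Finset.gcd_dvd hb)).mul_left _
  · intro hE
    suffices ∀ a, single a (E a) ∈ (weightedPush π d).range by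
      rw [← sum_single E]
      exact AddSubgroup.sum_mem _ fun a _ => this a
    intro a
    obtain ⟨k, hk⟩ := hE a
    obtain ⟨c, hc⟩ := Finset.gcd_eq_sum_mul (fiber a) fun b => (d b : ℤ)
    refine ⟨∑ b ∈ fiber a, single b (k * c b), ?_⟩
    rw [map_sum, hk, Finset.natCast_gcd, hc, Finset.sum_mul, single_finsetSum]
    refine Finset.sum_congr rfl fun b hb => ?_
    rw [weightedPush_single, (hfiber a b).mp hb]
    congr 1
    ring

theorem injective_weightedPush_iff (hd : ∀ b, 0 < d b) :
    Function.Injective (weightedPush π d) ↔ ∀ a, (fiber a).card ≤ 1 := by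
  classical
  simp_rw [Finset.card_le_one, hfiber]
  constructor
  · rintro hinj a b rfl b' hb'
    by_contra hne
    have hker : weightedPush π d (single b (d b' : ℤ) - single b' (d b : ℤ)) = 0 := by
      rw [map_sub, weightedPush_single, weightedPush_single, hb', mul_comm, sub_self]
    have := DFunLike.congr_fun (hinj (hker.trans (map_zero _).symm)) b
    simp [hne, (hd b').ne'] at this
  · intro hfib
    rw [injective_iff_map_eq_zero]
    intro D hD
    ext b
    have hsingle : fiber (π b) = {b} :=
      Finset.eq_singleton_iff_unique_mem.mpr
        ⟨(hfiber _ _).mpr rfl, fun b' hb' => hfib _ _ ((hfiber _ _).mp hb') _ rfl⟩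
    have := DFunLike.congr_fun hD (π b)
    rw [weightedPush_apply d hfiber, hsingle, Finset.sum_singleton] at this
    simpa [(hd b).ne'] using this

variable (S : Finset α) (hS : ∀ a ∉ S, ∃ b, fiber a = {b} ∧ d b = 1)
include hS

theorem range_weightedPush_of_fiber_eq_singleton :
    Set.range (weightedPush π d) = {E | ∀ a ∈ S, (((fiber a).gcd d : ℕ) : ℤ) ∣ E a} := by
  rw [range_weightedPush d hfiber]
  refine Set.ext fun E => ⟨fun hE a _ => hE a, fun hE a => ?_⟩
  by_cases ha : a ∈ S
  · exact hE a ha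
  · obtain ⟨b, hb, hdb⟩ := hS a ha
    simp [hb, hdb]

theorem weightedPush_eq_zero_iff_of_fiber_eq_singleton (D : β →₀ ℤ) :
    weightedPush π d D = 0 ↔
      (∀ b, π b ∉ S → D b = 0) ∧ ∀ a ∈ S, ∑ b ∈ fiber a, D b * d b = 0 := by
  have hunram : ∀ b, π b ∉ S → ∑ b' ∈ fiber (π b), D b' * d b' = D b := by
    intro b hb
    obtain ⟨b', hfib, hdb'⟩ := hS _ hb
    obtain rfl : b = b' := Finset.mem_singleton.mp (hfib ▸ (hfiber _ _).mpr rfl)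
    simp [hfib, hdb']
  rw [Finsupp.ext_iff]
  simp_rw [Finsupp.coe_zero, Pi.zero_apply, weightedPush_apply d hfiber]
  constructor
  · exact fun h => ⟨fun b hb => hunram b hb ▸ h (π b), fun a _ => h a⟩
  · rintro ⟨hgood, hbad⟩ a
    by_cases ha : a ∈ S
    · exact hbad a ha
    · obtain ⟨b, hb, -⟩ := hS a ha
      obtain rfl : π b = a := (hfiber a b).mp (hb ▸ Finset.mem_singleton_self b)
      rw [hunram b ha, hgood b ha]

theorem injective_weightedPush_iff_of_fiber_eq_singleton (hd : ∀ b, 0 < d b)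
    (hne : ∀ a ∈ S, (fiber a).Nonempty) :
    Function.Injective (weightedPush π d) ↔ ∀ a ∈ S, (fiber a).card = 1 := by
  rw [injective_weightedPush_iff d hfiber hd]
  refine ⟨fun h a ha => le_antisymm (h a) (hne a ha).card_pos, fun h a => ?_⟩
  by_cases ha : a ∈ S
  · exact (h a ha).le
  · obtain ⟨b, hb, -⟩ := hS a ha
    simp [hb]

end WeightedPush

theorem nonempty_quotient_addEquiv_pi_zmod {α : Type*} (S : Finset α) (g : α → ℕ)
    (H : AddSubgroup (α →₀ ℤ))
    (hH : (H : Set (α →₀ ℤ)) = {E | ∀ a ∈ S, (g a : ℤ) ∣ E a}) :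
    Nonempty ((α →₀ ℤ) ⧸ H ≃+ ((a : S) → ZMod (g a))) := by
  let φ : (α →₀ ℤ) →+ ((a : S) → ZMod (g a)) :=
    AddMonoidHom.pi fun a => (Int.castAddHom (ZMod (g a))).comp (Finsupp.applyAddHom (a : α))
  have hφ : ∀ E a, φ E a = (E a : ZMod (g a)) := fun _ _ => rfl
  have hsurj : Function.Surjective φ := by
    intro v
    choose z hz using fun a => ZMod.intCast_surjective (v a)
    refine ⟨Finsupp.embDomain (Function.Embedding.subtype _) (Finsupp.equivFunOnFinite.symm z),
      funext fun a => ?_⟩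
    rw [hφ, ← hz a]
    exact congrArg _ (Finsupp.embDomain_apply_self (Function.Embedding.subtype _) _ a)
  have hker : H = φ.ker := by
    ext E
    rw [← SetLike.mem_coe, hH]
    simp [funext_iff, hφ, ZMod.intCast_zmod_eq_zero_iff_dvd]
  exact ⟨(QuotientAddGroup.quotientAddEquivOfEq hker).trans
    (QuotientAddGroup.quotientKerEquivOfSurjective φ hsurj)⟩

section ResidueDegree

variable {A B : Type*} [CommRing A] [CommRing B] [Algebra A B]

theorem resDeg_pos [Module.Finite A B] (P : Ideal B) [P.IsMaximal] : 0 < resDeg A B P := by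
  have : (P.comap (algebraMap A B)).IsMaximal := Ideal.isMaximal_comap_of_isIntegral_of_isMaximal P
  let := Ideal.Quotient.field (P.comap (algebraMap A B))
  let : Algebra (A ⧸ P.comap (algebraMap A B)) (B ⧸ P) :=
    (Ideal.quotientMap P (algebraMap A B) le_rfl).toAlgebra
  have : IsScalarTower A (A ⧸ P.comap (algebraMap A B)) (B ⧸ P) :=
    .of_algebraMap_eq fun _ => rfl
  have : Module.Finite (A ⧸ P.comap (algebraMap A B)) (B ⧸ P) :=
    .of_restrictScalars_finite A _ _
  exact Module.finrank_pos

theorem resDeg_eq_one_of_forall_exists_sub_mem (P : Ideal B) [P.IsMaximal]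
    [(P.comap (algebraMap A B)).IsMaximal] (h : ∀ y : B, ∃ a : A, y - algebraMap A B a ∈ P) :
    resDeg A B P = 1 := by
  let := Ideal.Quotient.field (P.comap (algebraMap A B))
  let : Algebra (A ⧸ P.comap (algebraMap A B)) (B ⧸ P) :=
    (Ideal.quotientMap P (algebraMap A B) le_rfl).toAlgebra
  refine (finrank_eq_one_iff_of_nonzero' (1 : B ⧸ P) one_ne_zero).mpr fun w => ?_
  obtain ⟨y, rfl⟩ := Ideal.Quotient.mk_surjective w
  obtain ⟨a, ha⟩ := h y
  refine ⟨Ideal.Quotient.mk _ a, ?_⟩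
  rw [Algebra.smul_def, mul_one]
  exact (Ideal.Quotient.mk_eq_mk_iff_sub_mem _ _).mpr (neg_sub y _ ▸ neg_mem ha)

theorem Ideal.eq_map_of_comap_eq_of_forall_exists_sub_mem {p : Ideal A}
    (h : ∀ y : B, ∃ a : A, y - algebraMap A B a ∈ p.map (algebraMap A B))
    {Q : Ideal B} (hQ : Q.comap (algebraMap A B) = p) : Q = p.map (algebraMap A B) := by
  have hle : p.map (algebraMap A B) ≤ Q := Ideal.map_le_iff_le_comap.mpr hQ.ge
  refine le_antisymm (fun y hy => ?_) hle
  obtain ⟨a, ha⟩ := h y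
  have haQ : algebraMap A B a ∈ Q := by simpa using Q.sub_mem hy (hle ha)
  have hap : a ∈ p := hQ ▸ Ideal.mem_comap.mpr haQ
  simpa using Ideal.add_mem _ ha (Ideal.mem_map_of_mem _ hap)

end ResidueDegree

section Normalization

variable (O : Type*) [CommRing O] (K : Type*) [Field K] [Algebra O K]

theorem exists_comapMax_eq [IsFractionRing O K] (p : MaximalSpectrum O) :
    ∃ P, comapMax O K P = p := by
  have hinj : Function.Injective (algebraMap O (integralClosure O K)) := fun a b h =>
    IsFractionRing.injective O K (congrArg Subtype.val h)
  have hker : RingHom.ker (algebraMap O (integralClosure O K)) ≤ p.asIdeal :=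
    ((RingHom.injective_iff_ker_eq_bot _).mp hinj).trans_le bot_le
  obtain ⟨P, hPmax, hP⟩ := Ideal.exists_ideal_over_maximal_of_isIntegral p.asIdeal hker
  exact ⟨⟨P, hPmax⟩, MaximalSpectrum.ext hP⟩

theorem exists_algebraMap_sub_mem_map_of_sup_conductor_eq_top {p : Ideal O}
    (hp : p ⊔ (conductorIdeal O K).comap (algebraMap O (integralClosure O K)) = ⊤)
    (y : integralClosure O K) :
    ∃ o : O, y - algebraMap O _ o ∈ p.map (algebraMap O (integralClosure O K)) := by
  obtain ⟨a, ha, c, hc, hac⟩ :=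
    Submodule.mem_sup.mp (hp.symm ▸ Submodule.mem_top : (1 : O) ∈ _)
  obtain ⟨o, ho⟩ := Ideal.mem_comap.mp hc y
  refine ⟨o, ?_⟩
  have hco : algebraMap O (integralClosure O K) o = algebraMap O _ c * y := Subtype.ext ho
  have hac' : algebraMap O (integralClosure O K) a + algebraMap O _ c = 1 := by
    rw [← map_add, hac, map_one]
  rw [hco, show y - algebraMap O _ c * y = algebraMap O _ a * y by
    linear_combination (-y) * hac']
  exact Ideal.mul_mem_right y _ (Ideal.mem_map_of_mem _ ha)

theorem exists_unique_comapMax_eq_of_sup_conductor_eq_top [IsFractionRing O K]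
    (p : MaximalSpectrum O)
    (hp : p.asIdeal ⊔ (conductorIdeal O K).comap (algebraMap O (integralClosure O K)) = ⊤) :
    ∃ P, (∀ Q, comapMax O K Q = p ↔ Q = P) ∧
      resDeg O (integralClosure O K) P.asIdeal = 1 := by
  have hdec := exists_algebraMap_sub_mem_map_of_sup_conductor_eq_top O K hp
  obtain ⟨P, hP⟩ := exists_comapMax_eq O K p
  have hPmap := Ideal.eq_map_of_comap_eq_of_forall_exists_sub_mem hdec (congrArg (·.asIdeal) hP)
  refine ⟨P, fun Q => ⟨fun hQ => MaximalSpectrum.ext ?_, fun hQ => hQ ▸ hP⟩, ?_⟩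
  · rw [hPmap]
    exact Ideal.eq_map_of_comap_eq_of_forall_exists_sub_mem hdec (congrArg (·.asIdeal) hQ)
  · have := P.isMaximal
    have : (P.asIdeal.comap (algebraMap O (integralClosure O K))).IsMaximal :=
      (comapMax O K P).isMaximal
    refine resDeg_eq_one_of_forall_exists_sub_mem P.asIdeal fun y => ?_
    obtain ⟨o, ho⟩ := hdec y
    exact ⟨o, hPmap ▸ ho⟩

theorem pushforward_eq_weightedPush :
    pushforward O K =
      weightedPush (comapMax O K) fun P => resDeg O (integralClosure O K) P.asIdeal :=
  rfl

end Normalization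

theorem stmt5_general (O : Type*) [CommRing O]
    (K : Type*) [Field K] [Algebra O K] [IsFractionRing O K]
    [Module.Finite O (integralClosure O K)]
    (bad : Finset (MaximalSpectrum O))
    (hbad : ∀ p : MaximalSpectrum O, p ∈ bad ↔
      ¬ (p.asIdeal ⊔ (conductorIdeal O K).comap (algebraMap O (integralClosure O K)) = ⊤))
    (above : MaximalSpectrum O → Finset (MaximalSpectrum (integralClosure O K)))
    (habove : ∀ (p : MaximalSpectrum O) (P : MaximalSpectrum (integralClosure O K)),
      P ∈ above p ↔ comapMax O K P = p) :
    Set.range ⇑(pushforward O K) =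
      {D : Div O | ∀ p ∈ bad,
        ((((above p).gcd fun P => resDeg O (integralClosure O K) P.asIdeal) : ℕ) : ℤ) ∣ D p} ∧
    {D : Div (integralClosure O K) |
        (∀ P : MaximalSpectrum (integralClosure O K), comapMax O K P ∉ bad → D P = 0) ∧
        ∀ p ∈ bad, ∑ P ∈ above p, D P * (resDeg O (integralClosure O K) P.asIdeal : ℤ) = 0}
      = {D | pushforward O K D = 0} ∧
    Nonempty ((Div O ⧸ (pushforward O K).range) ≃+
      ((p : bad) → ZMod ((above p).gcd fun P => resDeg O (integralClosure O K) P.asIdeal))) ∧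
    (Function.Injective ⇑(pushforward O K) ↔ ∀ p ∈ bad, (above p).card = 1) := by
  have hgood : ∀ p ∉ bad, ∃ P,
      above p = {P} ∧ resDeg O (integralClosure O K) P.asIdeal = 1 := by
    intro p hp
    obtain ⟨P, hP, hdeg⟩ :=
      exists_unique_comapMax_eq_of_sup_conductor_eq_top O K p (not_not.mp ((hbad p).not.mp hp))
    exact ⟨P, Finset.ext fun Q => by rw [habove, hP, Finset.mem_singleton], hdeg⟩
  have hne : ∀ p ∈ bad, (above p).Nonempty := fun p _ =>
    (exists_comapMax_eq O K p).imp fun P hP => (habove p P).mpr hP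
  have hdeg : ∀ P : MaximalSpectrum (integralClosure O K),
      0 < resDeg O (integralClosure O K) P.asIdeal := fun P =>
    have := P.isMaximal
    resDeg_pos P.asIdeal
  have hrange := range_weightedPush_of_fiber_eq_singleton _ habove bad hgood
  rw [pushforward_eq_weightedPush]
  refine ⟨hrange, Set.ext fun D =>
      (weightedPush_eq_zero_iff_of_fiber_eq_singleton _ habove bad hgood D).symm, ?_,
    injective_weightedPush_iff_of_fiber_eq_singleton _ habove bad hgood hdeg hne⟩
  exact nonempty_quotient_addEquiv_pi_zmod bad _ _ ((AddMonoidHom.coe_range _).trans hrange)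

theorem stmt5 (O : Type*) [CommRing O] [IsDomain O] [IsNoetherianRing O] [Ring.DimensionLEOne O]
    (K : Type*) [Field K] [Algebra O K] [IsFractionRing O K]
    [Module.Finite O (integralClosure O K)]
    (bad : Finset (MaximalSpectrum O))
    (hbad : ∀ p : MaximalSpectrum O, p ∈ bad ↔
      ¬ (p.asIdeal ⊔ (conductorIdeal O K).comap (algebraMap O (integralClosure O K)) = ⊤))
    (above : MaximalSpectrum O → Finset (MaximalSpectrum (integralClosure O K)))
    (habove : ∀ (p : MaximalSpectrum O) (P : MaximalSpectrum (integralClosure O K)),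
      P ∈ above p ↔ comapMax O K P = p) :
    Set.range ⇑(pushforward O K) =
      {D : Div O | ∀ p ∈ bad,
        ((((above p).gcd fun P => resDeg O (integralClosure O K) P.asIdeal) : ℕ) : ℤ) ∣ D p} ∧
    {D : Div (integralClosure O K) |
        (∀ P : MaximalSpectrum (integralClosure O K), comapMax O K P ∉ bad → D P = 0) ∧
        ∀ p ∈ bad, ∑ P ∈ above p, D P * (resDeg O (integralClosure O K) P.asIdeal : ℤ) = 0}
      = {D | pushforward O K D = 0} ∧
    Nonempty ((Div O ⧸ (pushforward O K).range) ≃+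
      ((p : bad) → ZMod ((above p).gcd fun P => resDeg O (integralClosure O K) P.asIdeal))) ∧
    (Function.Injective ⇑(pushforward O K) ↔ ∀ p ∈ bad, (above p).card = 1) :=
  stmt5_general O K bad hbad above habove

end ChowPaper
end
end

section
/- Let O be a one-dimensional noetherian domain with normalization Õ finite over O, non-invertible maximal ideals p₁,…,p_r, primes P_{i,j} of Õ over p_i with degrees d_{i,j}, g_i = gcd_j(d_{i,j}) = Σ_j λ_{i,j} d_{i,j}, and Q_i = Σ_j λ_{i,j} P_{i,j} ∈ Div(Õ). Then the kernel of the push-forward f_* : Div(Õ) → Div(O) is generated by the divisors (d_{i,j}/g_i)·Q_i − P_{i,j} for 1 ≤ i ≤ r, 1 ≤ j ≤ r_i. -/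
set_option maxHeartbeats 1000000
set_option synthInstance.maxHeartbeats 400000

noncomputable section
namespace ChowPaper


open scoped nonZeroDivisors

open scoped nonZeroDivisors

/-!
The push-forward is the weighted map `Σ aᵢ Pᵢ ↦ Σ aᵢ dᵢ π(Pᵢ)` of free abelian groups, where
`π(P) = P ∩ O` and `dᵢ > 0`. Each generator is in the kernel because `f_* Q_p = g_p · p`.
Conversely, a prime `p` not containing the conductor has a single prime of `Õ` above it: if `b`
lies in the conductor but not in `p`, then `b·y ∈ O` for every `y ∈ Õ`, so any two primes over
`p` contain each other. Hence a kernel element `D` lives over the non-invertible primes, and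
`Σ_P D_P · ((d_P / g_p) Q_p - P) = -D`, since for each `p` the coefficient of `Q_p` is
`(Σ_{P ∣ p} D_P d_P) / g_p = 0`.
-/

open Finsupp

theorem sum_smul_comp_eq_zero_of_sum_fiber_eq_zero {ι κ R M : Type*} [DecidableEq κ] [Semiring R]
    [AddCommMonoid M] [Module R M] (s : Finset ι) (π : ι → κ) (c : ι → R) (v : κ → M)
    (hc : ∀ k, ∑ i ∈ s with π i = k, c i = 0) : ∑ i ∈ s, c i • v (π i) = 0 := by
  rw [← Finset.sum_fiberwise_of_maps_to (t := s.image π) (fun i hi => Finset.mem_image_of_mem π hi)]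
  refine Finset.sum_eq_zero fun k _ => ?_
  calc ∑ i ∈ s with π i = k, c i • v (π i)
      = ∑ i ∈ s with π i = k, c i • v k :=
        Finset.sum_congr rfl fun i hi => by rw [(Finset.mem_filter.mp hi).2]
    _ = 0 := by rw [← Finset.sum_smul, hc, zero_smul]

section WeightedMapDomain

variable {ι κ : Type*} (π : ι → κ) (d : ι → ℕ)

def weightedMapDomain : (ι →₀ ℤ) →+ (κ →₀ ℤ) :=
  liftAddHom fun i => zmultiplesHom _ (single (π i) (d i : ℤ))

theorem weightedMapDomain_single (i : ι) (n : ℤ) :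
    weightedMapDomain π d (single i n) = single (π i) (n * d i) := by
  rw [weightedMapDomain, liftAddHom_apply_single, zmultiplesHom_apply, smul_single, smul_eq_mul]

theorem weightedMapDomain_apply [DecidableEq κ] (D : ι →₀ ℤ) (k : κ) :
    weightedMapDomain π d D k = ∑ i ∈ D.support with π i = k, D i * d i := by
  conv_lhs => rw [← sum_single D]
  rw [Finsupp.sum, map_sum, finsetSum_apply, Finset.sum_filter]
  refine Finset.sum_congr rfl fun i _ => ?_
  rw [weightedMapDomain_single, single_apply]

theorem weightedMapDomain_sum_single_of_forall_eq {s : Finset ι} {k : κ} (hs : ∀ i ∈ s, π i = k)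
    (c : ι → ℤ) :
    weightedMapDomain π d (∑ i ∈ s, single i (c i)) = single k (∑ i ∈ s, c i * d i) := by
  rw [map_sum, single_finsetSum]
  exact Finset.sum_congr rfl fun i hi => by rw [weightedMapDomain_single, hs i hi]

variable {π d}

theorem apply_eq_zero_of_mem_ker_weightedMapDomain (hd : ∀ i, d i ≠ 0) {D : ι →₀ ℤ}
    (hD : D ∈ (weightedMapDomain π d).ker) {i : ι} (hi : (π ⁻¹' {π i}).Subsingleton) :
    D i = 0 := by
  classical
  by_contra hDi
  have hfiber : D.support.filter (fun j => π j = π i) = {i} :=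
    Finset.eq_singleton_iff_unique_mem.mpr ⟨Finset.mem_filter.mpr ⟨mem_support_iff.mpr hDi, rfl⟩,
      fun j hj => hi (Finset.mem_filter.mp hj).2 rfl⟩
  have h := weightedMapDomain_apply π d D (π i)
  rw [hD, hfiber, Finset.sum_singleton] at h
  exact mul_ne_zero hDi (Int.natCast_ne_zero.mpr (hd i)) h.symm

theorem closure_le_ker_weightedMapDomain (B : Set κ) (above : κ → Finset ι)
    (habove : ∀ k ∈ B, ∀ i, i ∈ above k ↔ π i = k) (g : κ → ℤ)
    (hg : ∀ k ∈ B, ∀ i ∈ above k, g k ∣ d i) (lam : ι → ℤ)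
    (hlam : ∀ k ∈ B, ∑ i ∈ above k, lam i * d i = g k) :
    AddSubgroup.closure {D : ι →₀ ℤ | ∃ k ∈ B, ∃ i ∈ above k,
      D = ((d i : ℤ) / g k) • (∑ j ∈ above k, single j (lam j)) - single i 1}
      ≤ (weightedMapDomain π d).ker := by
  rw [AddSubgroup.closure_le]
  rintro _ ⟨k, hk, i, hi, rfl⟩
  rw [SetLike.mem_coe, AddMonoidHom.mem_ker, map_sub, map_zsmul,
    weightedMapDomain_sum_single_of_forall_eq π d (fun j hj => (habove k hk j).mp hj),
    hlam k hk, weightedMapDomain_single, (habove k hk i).mp hi, smul_single, smul_eq_mul,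
    Int.ediv_mul_cancel (hg k hk i hi), one_mul, sub_self]

theorem ker_le_closure_weightedMapDomain (hd : ∀ i, d i ≠ 0) (B : Set κ)
    (hB : ∀ k ∉ B, (π ⁻¹' {k}).Subsingleton) (above : κ → Finset ι)
    (habove : ∀ k ∈ B, ∀ i, i ∈ above k ↔ π i = k) (g : κ → ℤ)
    (hg : ∀ k ∈ B, ∀ i ∈ above k, g k ∣ d i) (lam : ι → ℤ) :
    (weightedMapDomain π d).ker ≤ AddSubgroup.closure {D : ι →₀ ℤ | ∃ k ∈ B, ∃ i ∈ above k,
      D = ((d i : ℤ) / g k) • (∑ j ∈ above k, single j (lam j)) - single i 1} := by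
  classical
  set Q : κ → ι →₀ ℤ := fun k => ∑ j ∈ above k, single j (lam j)
  intro D hD
  have hB' : ∀ i ∈ D.support, π i ∈ B := fun i hi => by
    by_contra hiB
    exact mem_support_iff.mp hi (apply_eq_zero_of_mem_ker_weightedMapDomain hd hD (hB _ hiB))
  have hdvd : ∀ i ∈ D.support, g (π i) ∣ d i := fun i hi =>
    hg _ (hB' i hi) i ((habove _ (hB' i hi) i).mpr rfl)
  have hcoeff : ∀ k, ∑ i ∈ D.support with π i = k, D i * (d i / g (π i)) = 0 := by
    intro k
    have hterm : ∀ i ∈ D.support.filter (π · = k), D i * (d i / g (π i)) = D i * d i / g k := by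
      intro i hik
      obtain ⟨hi, rfl⟩ := Finset.mem_filter.mp hik
      exact (Int.mul_ediv_assoc _ (hdvd i hi)).symm
    have hdvd_k : ∀ i ∈ D.support.filter (π · = k), g k ∣ D i * d i := by
      intro i hik
      obtain ⟨hi, rfl⟩ := Finset.mem_filter.mp hik
      exact (hdvd i hi).mul_left _
    rw [Finset.sum_congr rfl hterm, ← Int.sum_div hdvd_k, ← weightedMapDomain_apply π d, hD,
      coe_zero, Pi.zero_apply, Int.zero_ediv]
  have hsum : ∑ i ∈ D.support, D i • ((d i / g (π i)) • Q (π i) - single i 1) = -D := by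
    simp only [smul_sub, smul_smul, Finset.sum_sub_distrib, smul_single_one]
    rw [sum_smul_comp_eq_zero_of_sum_fiber_eq_zero _ _ _ _ hcoeff, zero_sub, ← Finsupp.sum,
      sum_single]
  rw [← neg_neg D, ← hsum]
  refine neg_mem (AddSubgroup.sum_mem _ fun i hi =>
    AddSubgroup.zsmul_mem _ (AddSubgroup.subset_closure ?_) _)
  exact ⟨π i, hB' i hi, i, (habove _ (hB' i hi) i).mpr rfl, rfl⟩

theorem closure_eq_ker_weightedMapDomain (hd : ∀ i, d i ≠ 0) (B : Set κ)
    (hB : ∀ k ∉ B, (π ⁻¹' {k}).Subsingleton) (above : κ → Finset ι)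
    (habove : ∀ k ∈ B, ∀ i, i ∈ above k ↔ π i = k) (g : κ → ℤ)
    (hg : ∀ k ∈ B, ∀ i ∈ above k, g k ∣ d i) (lam : ι → ℤ)
    (hlam : ∀ k ∈ B, ∑ i ∈ above k, lam i * d i = g k) :
    AddSubgroup.closure {D : ι →₀ ℤ | ∃ k ∈ B, ∃ i ∈ above k,
      D = ((d i : ℤ) / g k) • (∑ j ∈ above k, single j (lam j)) - single i 1}
      = (weightedMapDomain π d).ker :=
  (closure_le_ker_weightedMapDomain B above habove g hg lam hlam).antisymm
    (ker_le_closure_weightedMapDomain hd B hB above habove g hg lam)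

end WeightedMapDomain

theorem resDeg_pos_s9 (O O' : Type*) [CommRing O] [CommRing O'] [Algebra O O'] [Module.Finite O O']
    (P : Ideal O') [P.IsMaximal] : 0 < resDeg O O' P := by
  let : Algebra (O ⧸ P.comap (algebraMap O O')) (O' ⧸ P) :=
    (Ideal.quotientMap P (algebraMap O O') le_rfl).toAlgebra
  have : (P.comap (algebraMap O O')).IsMaximal := Ideal.isMaximal_comap_of_isIntegral_of_isMaximal P
  let := Ideal.Quotient.field (P.comap (algebraMap O O'))
  let := Ideal.Quotient.field P
  have : IsScalarTower O (O ⧸ P.comap (algebraMap O O')) (O' ⧸ P) :=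
    IsScalarTower.of_algebraMap_eq fun _ => rfl
  have : Module.Finite O (O' ⧸ P) :=
    Module.Finite.of_surjective (Ideal.Quotient.mkₐ O P).toLinearMap Ideal.Quotient.mk_surjective
  have : Module.Finite (O ⧸ P.comap (algebraMap O O')) (O' ⧸ P) :=
    Module.Finite.of_restrictScalars_finite O _ _
  exact Module.finrank_pos

theorem le_of_comap_eq_of_forall_mul_mem_range {A B : Type*} [CommRing A] [CommRing B]
    (f : A →+* B) {b : A} (hb : ∀ y, f b * y ∈ f.range) {Q Q' : Ideal B} [Q'.IsPrime]
    (hQ : Q.comap f = Q'.comap f) (hbQ' : f b ∉ Q') : Q ≤ Q' := by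
  intro y hy
  obtain ⟨z, hz⟩ := hb y
  have hzQ : z ∈ Q.comap f := by
    rw [Ideal.mem_comap, hz]
    exact Q.mul_mem_left _ hy
  rw [hQ, Ideal.mem_comap, hz] at hzQ
  exact (Ideal.IsPrime.mem_or_mem ‹_› hzQ).resolve_left hbQ'

section Conductor

variable (O : Type*) [CommRing O] (K : Type*) [Field K] [Algebra O K]

theorem mul_mem_range_of_mem_conductorIdeal {x : integralClosure O K}
    (hx : x ∈ conductorIdeal O K) (y : integralClosure O K) :
    x * y ∈ (algebraMap O (integralClosure O K)).range := by
  obtain ⟨z, hz⟩ := hx y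
  exact ⟨z, Subtype.ext hz⟩

theorem subsingleton_comapMax_preimage (p : MaximalSpectrum O)
    (hp : p.asIdeal ⊔ (conductorIdeal O K).comap (algebraMap O (integralClosure O K)) = ⊤) :
    (comapMax O K ⁻¹' {p}).Subsingleton := by
  obtain ⟨b, hbF, hbp⟩ : ∃ b ∈ (conductorIdeal O K).comap (algebraMap O (integralClosure O K)),
      b ∉ p.asIdeal := by
    refine SetLike.not_le_iff_exists.mp fun hle => p.2.ne_top ?_
    rwa [sup_eq_left.mpr hle] at hp
  have hle : ∀ P Q : MaximalSpectrum (integralClosure O K), comapMax O K P = p →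
      comapMax O K Q = p → P.asIdeal ≤ Q.asIdeal := fun P Q hP hQ =>
    le_of_comap_eq_of_forall_mul_mem_range _
      (mul_mem_range_of_mem_conductorIdeal O K hbF)
      (congrArg MaximalSpectrum.asIdeal (hP.trans hQ.symm)) (by rw [← hQ] at hbp; exact hbp)
  intro P hP Q hQ
  exact MaximalSpectrum.ext ((hle P Q hP hQ).antisymm (hle Q P hQ hP))

end Conductor

theorem pushforward_eq_weightedMapDomain (O : Type*) [CommRing O] (K : Type*) [Field K]
    [Algebra O K] :
    pushforward O K =
      weightedMapDomain (comapMax O K) fun P => resDeg O (integralClosure O K) P.asIdeal :=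
  rfl

theorem stmt9_general (O : Type*) [CommRing O]
    (K : Type*) [Field K] [Algebra O K]
    [Module.Finite O (integralClosure O K)]
    (bad : Finset (MaximalSpectrum O))
    (hbad : ∀ p : MaximalSpectrum O, p ∈ bad ↔
      ¬ (p.asIdeal ⊔ (conductorIdeal O K).comap (algebraMap O (integralClosure O K)) = ⊤))
    (above : MaximalSpectrum O → Finset (MaximalSpectrum (integralClosure O K)))
    (habove : ∀ (p : MaximalSpectrum O) (P : MaximalSpectrum (integralClosure O K)),
      P ∈ above p ↔ comapMax O K P = p)
    (lam : MaximalSpectrum (integralClosure O K) → ℤ)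
    (hlam : ∀ p ∈ bad,
      ∑ P ∈ above p, lam P * (resDeg O (integralClosure O K) P.asIdeal : ℤ) =
        (((above p).gcd fun P => resDeg O (integralClosure O K) P.asIdeal : ℕ) : ℤ)) :
    AddSubgroup.closure {D : Div (integralClosure O K) | ∃ p ∈ bad, ∃ P ∈ above p,
      D = ((resDeg O (integralClosure O K) P.asIdeal : ℤ) /
            (((above p).gcd fun Q => resDeg O (integralClosure O K) Q.asIdeal : ℕ) : ℤ)) •
          (∑ Q ∈ above p, Finsupp.single Q (lam Q)) - Finsupp.single P 1}
      = (pushforward O K).ker := by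
  have hdeg : ∀ P : MaximalSpectrum (integralClosure O K),
      resDeg O (integralClosure O K) P.asIdeal ≠ 0 := fun P =>
    (resDeg_pos_s9 O (integralClosure O K) P.asIdeal).ne'
  have hgood : ∀ p ∉ (bad : Set (MaximalSpectrum O)), (comapMax O K ⁻¹' {p}).Subsingleton :=
    fun p hp => subsingleton_comapMax_preimage O K p (of_not_not ((hbad p).not.mp hp))
  rw [pushforward_eq_weightedMapDomain]
  have hker := closure_eq_ker_weightedMapDomain hdeg bad hgood above (fun p _ => habove p)
    (fun p => (((above p).gcd fun P => resDeg O (integralClosure O K) P.asIdeal : ℕ) : ℤ))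
    (fun _ _ _ hP => Int.natCast_dvd_natCast.mpr (Finset.gcd_dvd hP)) lam hlam
  exact hker

theorem stmt9 (O : Type*) [CommRing O] [IsDomain O] [IsNoetherianRing O] [Ring.DimensionLEOne O]
    (K : Type*) [Field K] [Algebra O K] [IsFractionRing O K]
    [Module.Finite O (integralClosure O K)]
    (bad : Finset (MaximalSpectrum O))
    (hbad : ∀ p : MaximalSpectrum O, p ∈ bad ↔
      ¬ (p.asIdeal ⊔ (conductorIdeal O K).comap (algebraMap O (integralClosure O K)) = ⊤))
    (above : MaximalSpectrum O → Finset (MaximalSpectrum (integralClosure O K)))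
    (habove : ∀ (p : MaximalSpectrum O) (P : MaximalSpectrum (integralClosure O K)),
      P ∈ above p ↔ comapMax O K P = p)
    (lam : MaximalSpectrum (integralClosure O K) → ℤ)
    (hlam : ∀ p ∈ bad,
      ∑ P ∈ above p, lam P * (resDeg O (integralClosure O K) P.asIdeal : ℤ) =
        (((above p).gcd fun P => resDeg O (integralClosure O K) P.asIdeal : ℕ) : ℤ)) :
    AddSubgroup.closure {D : Div (integralClosure O K) | ∃ p ∈ bad, ∃ P ∈ above p,
      D = ((resDeg O (integralClosure O K) P.asIdeal : ℤ) /
            (((above p).gcd fun Q => resDeg O (integralClosure O K) Q.asIdeal : ℕ) : ℤ)) •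
          (∑ Q ∈ above p, Finsupp.single Q (lam Q)) - Finsupp.single P 1}
      = (pushforward O K).ker :=
  stmt9_general O K bad hbad above habove lam hlam

end ChowPaper
end
end

section
/- Let O be a one-dimensional noetherian domain with normalization Õ finite over O. The canonical homomorphism Pic(O) → Cl(Õ), [a] ↦ [aÕ], is surjective. -/
set_option maxHeartbeats 1000000
set_option synthInstance.maxHeartbeats 400000

noncomputable section
namespace ChowPaper


open scoped nonZeroDivisors

open scoped nonZeroDivisors

open scoped nonZeroDivisors

section Extend
variable (O : Type*) [CommRing O] [IsDomain O] (K : Type*) [Field K] [Algebra O K]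
  [IsFractionRing O K]

/-- Extension of a fractional `O`-ideal to a fractional ideal over the
normalization `Õ = integralClosure O K`, i.e. `a ↦ aÕ`. -/
def extendFI (I : FractionalIdeal (nonZeroDivisors O) K) :
    FractionalIdeal (nonZeroDivisors (integralClosure O K)) K := by
  refine ⟨Submodule.span (integralClosure O K) ((I : Submodule O K) : Set K), ?_⟩
  obtain ⟨d, hd, hI⟩ := I.isFractional
  have hinj : Function.Injective (algebraMap O (integralClosure O K)) := by
    intro x y hxy
    apply IsFractionRing.injective O K
    rw [IsScalarTower.algebraMap_apply O (integralClosure O K) K,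
      IsScalarTower.algebraMap_apply O (integralClosure O K) K y, hxy]
  refine ⟨algebraMap O (integralClosure O K) d, ?_, ?_⟩
  · refine mem_nonZeroDivisors_of_ne_zero ?_
    intro h
    have hd0 : d ≠ 0 := nonZeroDivisors.ne_zero hd
    exact hd0 (hinj (by simpa using h))
  · intro x hx
    refine Submodule.span_induction ?_ ?_ ?_ ?_ hx
    · intro y hy
      obtain ⟨z, hz⟩ := hI y hy
      refine ⟨algebraMap O (integralClosure O K) z, ?_⟩
      rw [← IsScalarTower.algebraMap_apply O (integralClosure O K) K, hz,
        Algebra.smul_def, Algebra.smul_def, ← IsScalarTower.algebraMap_apply]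
    · exact ⟨0, by simp⟩
    · rintro y z - - ⟨cy, hcy⟩ ⟨cz, hcz⟩
      exact ⟨cy + cz, by rw [map_add, hcy, hcz, smul_add]⟩
    · rintro r y - ⟨c, hc⟩
      refine ⟨r * c, ?_⟩
      simp only [Algebra.smul_def] at hc ⊢
      rw [map_mul, hc]
      ring
end Extend

/-- `D` is the divisor of the invertible fractional ideal `I`: at each maximal
ideal `p`, `I` is locally generated by some `g` and the coefficient of `D` at
`p` is `ord_p(g)`. -/
def IsDivisorOf (O : Type*) [CommRing O] (K : Type*) [Field K] [Algebra O K]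
    (I : FractionalIdeal (nonZeroDivisors O) K) (D : Div O) : Prop :=
  ∀ p : MaximalSpectrum O, ∃ g : K, g ≠ 0 ∧
    (∀ y : K, (∃ s : O, s ∉ p.asIdeal ∧ s • y ∈ (I : Submodule O K)) ↔
      (∃ s : O, s ∉ p.asIdeal ∧ ∃ c : O, s • y = c • g)) ∧
    D p = @ord O _ K _ _ p.asIdeal p.2.isPrime g


/-!
The normalization `Õ` is a Dedekind domain, and since it is a finite `O`-module there is
`f ≠ 0` with `fÕ ⊆ O`. Every class of `Õ` contains an integral ideal `J` with `J + fÕ = Õ`.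
Put `C = fÕ` and `𝔞 = J ∩ O`; all computations take place in the semiring of `O`-submodules
of `K`. The modular law gives `𝔞 + C = O`, hence `J = J𝔞 + JC ⊆ Õ𝔞`, i.e. `𝔞Õ = J`. Then
`𝔞J⁻¹ = 𝔞ÕJ⁻¹ = Õ`, and `𝔞 (O + C J⁻¹) = 𝔞 + CÕ = 𝔞 + C = O`, so `𝔞` is invertible.
-/

section SubmoduleLattice

variable {R S : Type*} [CommRing R] [CommRing S] [Algebra R S] {A J J' C : Submodule R S}

theorem one_le_inf_one_sup (hC : C ≤ 1) (h : 1 ≤ J ⊔ C) : 1 ≤ J ⊓ 1 ⊔ C := by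
  rw [sup_comm, ← sup_inf_assoc_of_le J hC, sup_comm]
  exact le_inf h le_rfl

theorem mul_inf_one_eq (hA : 1 ≤ A) (hJA : J ≤ A) (hAJ : A * J ≤ J) (hC : C ≤ 1)
    (hAC : A * C ≤ C) (h : 1 ≤ J ⊔ C) : A * (J ⊓ 1) = J := by
  refine le_antisymm ((mul_le_mul' le_rfl inf_le_left).trans hAJ) ?_
  have hJC : J * C ≤ J ⊓ 1 :=
    le_inf ((mul_le_mul' le_rfl hC).trans (mul_one J).le)
      ((mul_le_mul' hJA le_rfl).trans (hAC.trans hC))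
  calc J = J * 1 := (mul_one J).symm
    _ ≤ J * (J ⊓ 1 ⊔ C) := mul_le_mul' le_rfl (one_le_inf_one_sup hC h)
    _ = J * (J ⊓ 1) ⊔ J * C := Submodule.mul_sup _ _ _
    _ ≤ A * (J ⊓ 1) := sup_le (mul_le_mul' hJA le_rfl)
        (hJC.trans (le_mul_of_one_le_left' hA))

theorem inf_one_mul_one_sup_eq_one (hA : 1 ≤ A) (hJA : J ≤ A) (hAJ : A * J ≤ J) (hC : C ≤ 1)
    (hAC : A * C ≤ C) (h : 1 ≤ J ⊔ C) (hJJ' : J * J' = A) (hAJ' : A * J' ≤ J') :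
    (J ⊓ 1) * (1 ⊔ C * J') = 1 := by
  have hJ'A : (J ⊓ 1) * J' = A := by
    refine le_antisymm (hJJ' ▸ mul_le_mul' inf_le_left le_rfl) ?_
    calc A = A * (J ⊓ 1) * J' := by rw [mul_inf_one_eq hA hJA hAJ hC hAC h, hJJ']
      _ ≤ (J ⊓ 1) * J' := by rw [mul_comm A, mul_assoc]; exact mul_le_mul' le_rfl hAJ'
  have hCA : C * A = C := le_antisymm (mul_comm C A ▸ hAC) (le_mul_of_one_le_right' hA)
  calc (J ⊓ 1) * (1 ⊔ C * J') = J ⊓ 1 ⊔ C := by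
        rw [Submodule.mul_sup, mul_one, mul_left_comm, hJ'A, hCA]
    _ = 1 := le_antisymm (sup_le inf_le_right hC) (one_le_inf_one_sup hC h)

end SubmoduleLattice

section Tower

variable {R T S : Type*} [CommRing R] [CommRing T] [CommRing S] [Algebra R T] [Algebra T S]
  [Algebra R S] [IsScalarTower R T S]

theorem one_le_restrictScalars_one :
    (1 : Submodule R S) ≤ (1 : Submodule T S).restrictScalars R := by
  rw [Submodule.one_le, Submodule.restrictScalars_mem, ← Submodule.one_le]

theorem restrictScalars_one_mul (M : Submodule T S) :
    (1 : Submodule T S).restrictScalars R * M.restrictScalars R = M.restrictScalars R := by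
  rw [← Submodule.restrictScalars_mul, one_mul]

theorem span_eq_of_restrictScalars_one_mul_eq {N : Submodule R S} {M : Submodule T S}
    (h : (1 : Submodule T S).restrictScalars R * N = M.restrictScalars R) :
    Submodule.span T (N : Set S) = M := by
  refine le_antisymm (Submodule.span_le.mpr fun n hn => ?_) fun x hx => ?_
  · refine (Submodule.restrictScalars_mem R M n).mp ?_
    rw [← h]
    exact le_mul_of_one_le_left' one_le_restrictScalars_one hn
  · replace hx : x ∈ M.restrictScalars R := hx
    rw [← h] at hx
    refine (Submodule.mul_le (P := (Submodule.span T (N : Set S)).restrictScalars R)).mpr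
      (fun a ha n hn => ?_) hx
    obtain ⟨t, rfl⟩ := Submodule.mem_one.mp ha
    rw [← Algebra.smul_def]
    exact Submodule.smul_mem _ t (Submodule.subset_span hn)

end Tower

theorem ClassGroup.exists_mk0_eq_of_sup_eq_top {R : Type*} [CommRing R] [IsDedekindDomain R]
    (c : ClassGroup R) {M : Ideal R} (hM : M ≠ ⊥) :
    ∃ J : (Ideal R)⁰, (J : Ideal R) ⊔ M = ⊤ ∧ ClassGroup.mk0 J = c := by
  by_cases hMtop : M = ⊤
  · obtain ⟨J, rfl⟩ := ClassGroup.mk0_surjective c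
    exact ⟨J, by rw [hMtop, sup_top_eq], rfl⟩
  obtain ⟨B, hB⟩ := ClassGroup.mk0_surjective c⁻¹
  have hB0 : (B : Ideal R) ≠ 0 := nonZeroDivisors.coe_ne_zero B
  obtain ⟨a, ha⟩ := IsDedekindDomain.exists_sup_span_eq
    (Ideal.mul_le_left : (B : Ideal R) * M ≤ B) (mul_ne_zero hB0 hM)
  obtain ⟨J, hJ⟩ : (B : Ideal R) ∣ Ideal.span {a} := Ideal.dvd_iff_le.mpr (ha ▸ le_sup_right)
  have hJM : J ⊔ M = ⊤ := by
    refine sup_comm M J ▸ mul_left_cancel₀ hB0 ?_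
    rw [Ideal.mul_sup, ← hJ, ha, Ideal.mul_top]
  have hJ0 : J ≠ ⊥ := by
    rintro rfl
    exact hMtop (by rwa [bot_sup_eq] at hJM)
  refine ⟨⟨J, mem_nonZeroDivisors_of_ne_zero hJ0⟩, hJM, ?_⟩
  rw [← inv_inv c, ← hB, ClassGroup.mk0_eq_mk0_inv_iff]
  refine ⟨a, ?_, by rw [mul_comm]; exact hJ.symm⟩
  rintro rfl
  exact mul_ne_zero hB0 hJ0 (by rw [← hJ, Ideal.span_singleton_eq_bot.mpr rfl]; rfl)

section Normalization

variable (O : Type*) [CommRing O] (K : Type*) [Field K] [Algebra O K]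

local notation "Õ" => integralClosure O K

theorem isDedekindDomain_integralClosure [Nontrivial O] [IsNoetherianRing O]
    [Ring.DimensionLEOne O] [Module.Finite O Õ] [IsFractionRing Õ K] : IsDedekindDomain Õ :=
  have : IsNoetherianRing Õ := IsNoetherianRing.of_finite O Õ
  have : IsIntegrallyClosed Õ :=
    (IsIntegrallyClosed.integralClosure_eq_bot_iff K).mp integralClosure_idem
  { }

theorem exists_ne_zero_coeSubmodule_span_le_one [Nontrivial O] [IsFractionRing O K]
    [Module.Finite O Õ] :
    ∃ f : Õ, f ≠ 0 ∧
      (IsLocalization.coeSubmodule K (Ideal.span {f})).restrictScalars O ≤ 1 := by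
  have hfg : ((1 : Submodule Õ K).restrictScalars O).FG := by
    convert (Module.Finite.fg_top (R := O) (M := Õ)).map
      (IsScalarTower.toAlgHom O Õ K).toLinearMap
    ext x
    simp
  obtain ⟨a, ha, hint⟩ := FractionalIdeal.isFractional_of_fg (S := O⁰) hfg
  refine ⟨algebraMap O Õ a,
    fun h => nonZeroDivisors.ne_zero ha (IsFractionRing.injective O K ?_), ?_⟩
  · rw [IsScalarTower.algebraMap_apply O Õ K, h, map_zero, map_zero]
  · intro x hx
    rw [Submodule.restrictScalars_mem, IsLocalization.coeSubmodule_span_singleton,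
      Submodule.mem_span_singleton] at hx
    obtain ⟨c, rfl⟩ := hx
    obtain ⟨o, ho⟩ := hint _ (Submodule.mem_one.mpr ⟨c, rfl⟩)
    refine Submodule.mem_one.mpr ⟨o, ?_⟩
    rw [ho, Algebra.smul_def, Algebra.smul_def, ← IsScalarTower.algebraMap_apply, mul_comm]

theorem exists_extendFI_eq [IsDomain O] [IsFractionRing O K] (J : (FractionalIdeal Õ⁰ K)ˣ)
    (hJ : (J : FractionalIdeal Õ⁰ K) ≤ 1) {C : Submodule Õ K} (hC : C.restrictScalars O ≤ 1)
    (hJC : (J : Submodule Õ K) ⊔ C = 1) :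
    ∃ I : (FractionalIdeal O⁰ K)ˣ, extendFI O K I = J := by
  have hA := one_le_restrictScalars_one (R := O) (T := Õ) (S := K)
  have hJA : (J : Submodule Õ K).restrictScalars O ≤ (1 : Submodule Õ K).restrictScalars O :=
    Submodule.restrictScalars_mono O
      ((FractionalIdeal.coe_le_coe.mpr hJ).trans_eq FractionalIdeal.coe_one)
  have hAJ := (restrictScalars_one_mul (R := O) (J : Submodule Õ K)).le
  have hAJ' := (restrictScalars_one_mul (R := O)
    ((J⁻¹ : (FractionalIdeal Õ⁰ K)ˣ) : Submodule Õ K)).le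
  have hAC := (restrictScalars_one_mul (R := O) C).le
  have hJC' : 1 ≤ (J : Submodule Õ K).restrictScalars O ⊔ C.restrictScalars O := by
    rwa [← Submodule.restrictScalars_sup, hJC]
  have hJJ' : (J : Submodule Õ K).restrictScalars O *
      ((J⁻¹ : (FractionalIdeal Õ⁰ K)ˣ) : Submodule Õ K).restrictScalars O =
      (1 : Submodule Õ K).restrictScalars O := by
    rw [← Submodule.restrictScalars_mul, ← FractionalIdeal.coe_mul, J.mul_inv,
      FractionalIdeal.coe_one]
  have hI := inf_one_mul_one_sup_eq_one hA hJA hAJ hC hAC hJC' hJJ' hAJ'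
  refine ⟨FractionalIdeal.unitsMulEquivSubmodule.symm (Units.mkOfMulEqOne _ _ hI), ?_⟩
  exact FractionalIdeal.coeToSubmodule_injective
    (span_eq_of_restrictScalars_one_mul_eq (mul_inf_one_eq hA hJA hAJ hC hAC hJC'))

end Normalization

theorem stmt11 (O : Type*) [CommRing O] [IsDomain O] [IsNoetherianRing O] [Ring.DimensionLEOne O]
    (K : Type*) [Field K] [Algebra O K] [IsFractionRing O K]
    [Module.Finite O (integralClosure O K)]
    [IsFractionRing (integralClosure O K) K] :
    ∀ c : ClassGroup (integralClosure O K),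
      ∃ (I : (FractionalIdeal (nonZeroDivisors O) K)ˣ)
        (J : (FractionalIdeal (nonZeroDivisors (integralClosure O K)) K)ˣ),
        (J : FractionalIdeal (nonZeroDivisors (integralClosure O K)) K) = extendFI O K ↑I ∧
        ClassGroup.mk K J = c := by
  intro c
  have := isDedekindDomain_integralClosure O K
  obtain ⟨f, hf0, hf⟩ := exists_ne_zero_coeSubmodule_span_le_one O K
  obtain ⟨J, hJf, rfl⟩ := ClassGroup.exists_mk0_eq_of_sup_eq_top c
    (M := Ideal.span {f}) (by rwa [ne_eq, Ideal.span_singleton_eq_bot])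
  have hJ1 : (FractionalIdeal.mk0 K J : FractionalIdeal (integralClosure O K)⁰ K) ≤ 1 := by
    rw [FractionalIdeal.coe_mk0]
    exact FractionalIdeal.coeIdeal_le_one
  have hJC : ((FractionalIdeal.mk0 K J : FractionalIdeal (integralClosure O K)⁰ K) :
      Submodule (integralClosure O K) K) ⊔ IsLocalization.coeSubmodule K (Ideal.span {f}) = 1 :=
    by
    rw [FractionalIdeal.coe_mk0, FractionalIdeal.coe_coeIdeal, ← IsLocalization.coeSubmodule_sup,
      hJf, IsLocalization.coeSubmodule_top]
  obtain ⟨I, hI⟩ := exists_extendFI_eq O K _ hJ1 hf hJC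
  exact ⟨I, _, hI.symm, ClassGroup.mk_mk0 K J⟩

end ChowPaper
end
end

section
/- Let K be a number field with ring of integers Õ, let A be a nonzero ideal of Õ, and let p be a prime number with ℤ ∩ A ⊆ pℤ. Then: (1) ℤ + A is an order in K; (2) A is a conductor ideal (of some order) if and only if ℤ + A has conductor A, and in that case ℤ + A is the smallest order in K with conductor A; (3) p := pℤ + A is a maximal ideal of ℤ + A lying over p with residue field F_p; (4) if A is a conductor ideal, then p is the unique non-invertible maximal ideal of ℤ + A lying over p. -/
set_option maxHeartbeats 1000000
set_option synthInstance.maxHeartbeats 400000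

noncomputable section
namespace ChowPaper


open scoped nonZeroDivisors

open scoped nonZeroDivisors


section NF
variable (K : Type*) [Field K] [Algebra ℚ K]

/-- The conductor `{x ∈ Õ : xÕ ⊆ R}` of a subring `R` of the ring of integers
`Õ = integralClosure ℤ K`, as an ideal of `Õ`. -/
def condOf (R : Subring (integralClosure ℤ K)) : Ideal (integralClosure ℤ K) where
  carrier := {x | ∀ y : integralClosure ℤ K, x * y ∈ R}
  add_mem' := by
    intro a b ha hb y
    have h : (a + b) * y = a * y + b * y := by ring
    rw [h]; exact add_mem (ha y) (hb y)
  zero_mem' := by intro y; rw [zero_mul]; exact zero_mem _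
  smul_mem' := by
    intro c x hx y
    rw [smul_eq_mul]
    have h : c * x * y = x * (c * y) := by ring
    rw [h]; exact hx (c * y)

/-- The subring `ℤ + A` of `Õ = integralClosure ℤ K`, for an ideal `A` of `Õ`. -/
def zPlus (A : Ideal (integralClosure ℤ K)) : Subring (integralClosure ℤ K) where
  carrier := {z | ∃ m : ℤ, z - m ∈ A}
  one_mem' := ⟨1, by simp⟩
  zero_mem' := ⟨0, by simp⟩
  add_mem' := by
    rintro a b ⟨m, hm⟩ ⟨n, hn⟩
    refine ⟨m + n, ?_⟩
    have h : a + b - ((m + n : ℤ) : integralClosure ℤ K) = (a - m) + (b - n) := by push_cast; ring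
    rw [h]; exact A.add_mem hm hn
  neg_mem' := by
    rintro a ⟨m, hm⟩
    refine ⟨-m, ?_⟩
    have h : -a - ((-m : ℤ) : integralClosure ℤ K) = -(a - m) := by push_cast; ring
    rw [h]; exact A.neg_mem hm
  mul_mem' := by
    rintro a b ⟨m, hm⟩ ⟨n, hn⟩
    refine ⟨m * n, ?_⟩
    have h : a * b - ((m * n : ℤ) : integralClosure ℤ K)
        = a * (b - n) + (n : integralClosure ℤ K) * (a - m) := by push_cast; ring
    rw [h]; exact A.add_mem (A.mul_mem_left a hn) (A.mul_mem_left _ hm)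

/-- The ideal `pℤ + A` of the order `ℤ + A`. -/
def pFrak (A : Ideal (integralClosure ℤ K)) (p : ℕ) : Ideal (zPlus K A) where
  carrier := {z | ∃ m : ℤ, (z : integralClosure ℤ K) - p * m ∈ A}
  zero_mem' := ⟨0, by simp⟩
  add_mem' := by
    rintro a b ⟨m, hm⟩ ⟨n, hn⟩
    refine ⟨m + n, ?_⟩
    have h : ((a + b : zPlus K A) : integralClosure ℤ K) - p * ((m + n : ℤ) : integralClosure ℤ K)
        = ((a : integralClosure ℤ K) - p * m) + ((b : integralClosure ℤ K) - p * n) := by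
      push_cast; ring
    rw [h]; exact A.add_mem hm hn
  smul_mem' := by
    rintro c x ⟨m, hm⟩
    obtain ⟨k, hk⟩ := c.2
    refine ⟨k * m, ?_⟩
    rw [smul_eq_mul]
    have h : ((c * x : zPlus K A) : integralClosure ℤ K) - p * ((k * m : ℤ) : integralClosure ℤ K)
        = (c : integralClosure ℤ K) * ((x : integralClosure ℤ K) - p * m)
          + ((p : integralClosure ℤ K) * (m : integralClosure ℤ K)) * ((c : integralClosure ℤ K) - k) := by
      push_cast; ring
    rw [h]; exact A.add_mem (A.mul_mem_left _ hm) (A.mul_mem_left _ hk)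

/-- `R` is an order in the number field `K`: a subring of `Õ` which is finitely
generated as a `ℤ`-module and contains a `ℚ`-basis of `K`. -/
def IsOrder (R : Subring (integralClosure ℤ K)) : Prop :=
  Module.Finite ℤ R ∧
    Submodule.span ℚ (Set.range fun x : R => ((x : integralClosure ℤ K) : K)) = ⊤

end NF

/-- The Chow group of an order `R` in the number field `K`. -/
def ChowOrder (K : Type*) [Field K] [Algebra ℚ K] (R : Subring (integralClosure ℤ K)) : Type _ :=
  @Chow R _ K _ (((algebraMap (integralClosure ℤ K) K).comp R.subtype).toAlgebra)

/-!
Every order `R` with conductor `A` contains `ℤ` and `A`, hence `ℤ + A`; the conductor being monotone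
and `A` always lying in the conductor of `ℤ + A`, this forces `condOf (ℤ + A) = A`. Since `ℤ + A` contains a
nonzero integer multiple of `Õ`, it has full rank. Reduction modulo `pℤ + A` identifies `(ℤ + A)/(pℤ + A)`
with `ℤ/pℤ`, because `ℤ ∩ A ⊆ pℤ`; and a maximal ideal containing `p` and the conductor `A` contains
`pℤ + A`, so it equals it.
-/

section Conductor

variable {K : Type*} [Field K]

local notation "Õ" => integralClosure ℤ K

theorem condOf_subset (R : Subring Õ) : (condOf K R : Set Õ) ⊆ R :=
  fun x hx => by simpa using hx 1

theorem condOf_mono {R S : Subring Õ} (h : R ≤ S) : condOf K R ≤ condOf K S :=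
  fun _ hx y => h (hx y)

theorem subset_zPlus (A : Ideal Õ) : (A : Set Õ) ⊆ zPlus K A :=
  fun a ha => ⟨0, by simpa using ha⟩

theorem le_condOf_zPlus (A : Ideal Õ) : A ≤ condOf K (zPlus K A) :=
  fun _ hx y => subset_zPlus A (A.mul_mem_right y hx)

theorem zPlus_le_of_le_condOf {A : Ideal Õ} {R : Subring Õ} (h : A ≤ condOf K R) :
    zPlus K A ≤ R := by
  rintro z ⟨m, hm⟩
  simpa using R.add_mem (condOf_subset R (h hm)) (intCast_mem R m)

theorem condOf_zPlus_eq_of_condOf_eq {A : Ideal Õ} {R : Subring Õ} (hR : condOf K R = A) :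
    condOf K (zPlus K A) = A :=
  le_antisymm ((condOf_mono (zPlus_le_of_le_condOf hR.ge)).trans hR.le) (le_condOf_zPlus A)

end Conductor

section PFrak

variable {K : Type*} [Field K]

local notation "Õ" => integralClosure ℤ K

theorem comap_subtype_le_pFrak (A : Ideal Õ) (p : ℕ) :
    A.comap (zPlus K A).subtype ≤ pFrak K A p :=
  fun _ hx => ⟨0, by simpa using hx⟩

theorem pFrak_le_of_natCast_mem {A : Ideal Õ} {p : ℕ} {q : Ideal (zPlus K A)}
    (hpq : (p : zPlus K A) ∈ q) (hAq : A.comap (zPlus K A).subtype ≤ q) : pFrak K A p ≤ q := by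
  rintro x ⟨m, hm⟩
  have hxm : x - p * m ∈ A.comap (zPlus K A).subtype := by simpa using hm
  simpa using q.add_mem (hAq hxm) (q.mul_mem_right (m : zPlus K A) hpq)

theorem intCast_mem_pFrak_iff {A : Ideal Õ} {p : ℕ}
    (hpA : A.comap (algebraMap ℤ Õ) ≤ Ideal.span {(p : ℤ)}) (m : ℤ) :
    (m : zPlus K A) ∈ pFrak K A p ↔ (p : ℤ) ∣ m := by
  refine ⟨fun ⟨k, hk⟩ => ?_, fun ⟨c, hc⟩ => ⟨c, by simp [hc]⟩⟩
  have hmk : m - p * k ∈ Ideal.span {(p : ℤ)} := hpA (by simpa using hk)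
  obtain ⟨c, hc⟩ := Ideal.mem_span_singleton.mp hmk
  exact ⟨k + c, by linarith⟩

theorem comap_pFrak {A : Ideal Õ} {p : ℕ}
    (hpA : A.comap (algebraMap ℤ Õ) ≤ Ideal.span {(p : ℤ)}) :
    (pFrak K A p).comap (algebraMap ℤ (zPlus K A)) = Ideal.span {(p : ℤ)} := by
  ext m
  simpa [Ideal.mem_span_singleton] using intCast_mem_pFrak_iff hpA m

theorem intCast_quotient_pFrak_surjective (A : Ideal Õ) (p : ℕ) :
    Function.Surjective (algebraMap ℤ (zPlus K A ⧸ pFrak K A p)) := by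
  intro x
  obtain ⟨z, rfl⟩ := Ideal.Quotient.mk_surjective x
  obtain ⟨m, hm⟩ := z.2
  refine ⟨m, (Ideal.Quotient.mk_eq_mk_iff_sub_mem _ _).mpr ?_⟩
  refine comap_subtype_le_pFrak A p ?_
  simpa using A.neg_mem hm

def quotientPFrakEquivZMod {A : Ideal Õ} {p : ℕ}
    (hpA : A.comap (algebraMap ℤ Õ) ≤ Ideal.span {(p : ℤ)}) :
    (zPlus K A ⧸ pFrak K A p) ≃+* ZMod p :=
  have hker : RingHom.ker (algebraMap ℤ (zPlus K A ⧸ pFrak K A p)) = Ideal.span {(p : ℤ)} := by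
    ext m
    rw [RingHom.mem_ker, eq_intCast, ← map_intCast (Ideal.Quotient.mk (pFrak K A p)),
      Ideal.Quotient.eq_zero_iff_mem, intCast_mem_pFrak_iff hpA, Ideal.mem_span_singleton]
  ((RingHom.quotientKerEquivOfSurjective (intCast_quotient_pFrak_surjective A p)).symm.trans
    (Ideal.quotEquivOfEq hker)).trans (Int.quotientSpanNatEquivZMod p)

theorem pFrak_isMaximal {A : Ideal Õ} {p : ℕ} (hp : p.Prime)
    (hpA : A.comap (algebraMap ℤ Õ) ≤ Ideal.span {(p : ℤ)}) : (pFrak K A p).IsMaximal :=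
  have : Fact p.Prime := ⟨hp⟩
  Ideal.Quotient.maximal_of_isField _
    ((quotientPFrakEquivZMod hpA).toMulEquiv.isField (Field.toIsField (ZMod p)))

end PFrak

section NumberField

variable {K : Type*} [Field K] [NumberField K]

local notation "Õ" => integralClosure ℤ K

theorem exists_intCast_mem_of_ne_bot {A : Ideal Õ} (hA : A ≠ ⊥) :
    ∃ n : ℤ, n ≠ 0 ∧ (n : Õ) ∈ A := by
  let A' : Ideal (NumberField.RingOfIntegers K) := A
  exact ⟨Ideal.absNorm A', by exact_mod_cast (Ideal.absNorm_eq_zero_iff (I := A')).not.mpr hA, by exact_mod_cast Ideal.absNorm_mem A'⟩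

theorem module_finite_subring (R : Subring Õ) : Module.Finite ℤ R := by
  have : Module.Finite ℤ Õ := inferInstanceAs (Module.Finite ℤ (NumberField.RingOfIntegers K))
  have : IsNoetherian ℤ Õ := isNoetherian_of_isNoetherianRing_of_finite ℤ _
  exact Module.Finite.iff_fg.mpr (IsNoetherian.noetherian (subalgebraOfSubring R).toSubmodule)

theorem span_coe_subring_eq_top {A : Ideal Õ} (hA : A ≠ ⊥) {R : Subring Õ}
    (hAR : (A : Set Õ) ⊆ R) :
    Submodule.span ℚ (Set.range fun x : R => ((x : Õ) : K)) = ⊤ := by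
  obtain ⟨n, hn, hnA⟩ := exists_intCast_mem_of_ne_bot hA
  refine eq_top_iff.mpr fun z _ => ?_
  have hz : IsAlgebraic ℤ z := (IsFractionRing.isAlgebraic_iff ℤ ℚ K).mpr
    ((Algebra.IsAlgebraic.of_finite ℚ K).isAlgebraic z)
  obtain ⟨d, hd, hdz⟩ := hz.exists_integral_multiple
  -- `n * (d • z)` lies in `A ⊆ R`, and `z` is its multiple by `(n * d)⁻¹ ∈ ℚ`.
  let y : R := ⟨n * ⟨d • z, hdz⟩, hAR (A.mul_mem_right _ hnA)⟩
  have hy : ((y : Õ) : K) = ((n * d : ℤ) : ℚ) • z := by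
    simp [y, Algebra.smul_def, mul_assoc]
  have hnd : ((n * d : ℤ) : ℚ) ≠ 0 := by exact_mod_cast mul_ne_zero hn hd
  rw [← inv_smul_smul₀ hnd z, ← hy]
  exact Submodule.smul_mem _ _ (Submodule.subset_span ⟨y, rfl⟩)

theorem isOrder_of_subset {A : Ideal Õ} (hA : A ≠ ⊥) {R : Subring Õ} (hAR : (A : Set Õ) ⊆ R) :
    IsOrder K R :=
  ⟨module_finite_subring R, span_coe_subring_eq_top hA hAR⟩

end NumberField

theorem stmt15 (K : Type*) [Field K] [NumberField K]
    (A : Ideal (integralClosure ℤ K)) (hA : A ≠ ⊥)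
    (p : ℕ) (hp : p.Prime)
    (hpA : A.comap (algebraMap ℤ (integralClosure ℤ K)) ≤ Ideal.span {(p : ℤ)}) :
    IsOrder K (zPlus K A) ∧
    ((∃ R : Subring (integralClosure ℤ K), IsOrder K R ∧ condOf K R = A) ↔
      condOf K (zPlus K A) = A) ∧
    (condOf K (zPlus K A) = A →
      ∀ R : Subring (integralClosure ℤ K), IsOrder K R → condOf K R = A → zPlus K A ≤ R) ∧
    ((pFrak K A p).IsMaximal ∧
      (pFrak K A p).comap (algebraMap ℤ (zPlus K A)) = Ideal.span {(p : ℤ)} ∧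
      Nonempty ((zPlus K A ⧸ pFrak K A p) ≃+* ZMod p)) ∧
    ((∃ R : Subring (integralClosure ℤ K), IsOrder K R ∧ condOf K R = A) →
      (condOf K (zPlus K A)).comap (zPlus K A).subtype ≤ pFrak K A p ∧
      ∀ q : Ideal (zPlus K A), q.IsMaximal →
        q.comap (algebraMap ℤ (zPlus K A)) = Ideal.span {(p : ℤ)} →
        (condOf K (zPlus K A)).comap (zPlus K A).subtype ≤ q → q = pFrak K A p) := by
  have hord : IsOrder K (zPlus K A) := isOrder_of_subset hA (subset_zPlus A)
  refine ⟨hord, ⟨fun ⟨_, _, hR⟩ => condOf_zPlus_eq_of_condOf_eq hR, fun h => ⟨_, hord, h⟩⟩,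
    fun _ _ _ hR => zPlus_le_of_le_condOf hR.ge,
    ⟨pFrak_isMaximal hp hpA, comap_pFrak hpA, ⟨quotientPFrakEquivZMod hpA⟩⟩, ?_⟩
  rintro ⟨_, _, hR⟩
  rw [condOf_zPlus_eq_of_condOf_eq hR]
  refine ⟨comap_subtype_le_pFrak A p, fun q hq hqp hAq => ?_⟩
  have hpq : (p : zPlus K A) ∈ q := by
    simpa using (Ideal.mem_comap.mp (hqp.ge (Ideal.mem_span_singleton_self (p : ℤ))))
  exact ((pFrak_isMaximal hp hpA).eq_of_le hq.ne_top (pFrak_le_of_natCast_mem hpq hAq)).symm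

end ChowPaper
end
end
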